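/- Let t₀ ≥ 0 and let ψ, α, β : [t₀,∞) → ℝ be regulated functions with α(t) ≤ β(t) for all t ≥ t₀, and assume TV^{α,β}(ψ,[t₀,t]) < ∞ for every t ≥ t₀. If ξ : [t₀,∞) → ℝ satisfies α(t) ≤ ψ(t) − ξ(t) ≤ β(t) for all t ≥ t₀ and TV(ξ,[t₀,t]) ≤ TV^{α,β}(ψ,[t₀,t]) for all t ≥ t₀, then for every t ≥ t₀, ξ(t) = ξ(t₀) + UTV^{α,β}(ψ,[t₀,t]) − DTV^{α,β}(ψ,[t₀,t]). In particular, any two such functions with the same value at t₀ coincide on [t₀,∞). -/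
import Mathlib


open Filter Set Topology
open scoped ENNReal

/-- Sum of `f` over consecutive pairs of a finite sequence of points. -/
noncomputable def genVar (f : ℝ → ℝ → ℝ) (a b : ℝ) : ℝ≥0∞ :=
  ⨆ (n : ℕ) (t : ℕ → ℝ)
    (_ : (∀ i, i < n → t i < t (i + 1)) ∧ a ≤ t 0 ∧ t n ≤ b),
    ENNReal.ofReal (∑ i ∈ Finset.range n, f (t i) (t (i + 1)))

noncomputable def TV (ψ : ℝ → ℝ) : ℝ → ℝ → ℝ≥0∞ :=
  genVar (fun s t => |ψ t - ψ s|)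

noncomputable def UTV (ψ : ℝ → ℝ) : ℝ → ℝ → ℝ≥0∞ :=
  genVar (fun s t => max (ψ t - ψ s) 0)

noncomputable def DTV (ψ : ℝ → ℝ) : ℝ → ℝ → ℝ≥0∞ :=
  genVar (fun s t => max (ψ s - ψ t) 0)

noncomputable def TVc (ψ : ℝ → ℝ) (c : ℝ) : ℝ → ℝ → ℝ≥0∞ :=
  genVar (fun s t => max (|ψ t - ψ s| - c) 0)

noncomputable def UTVc (ψ : ℝ → ℝ) (c : ℝ) : ℝ → ℝ → ℝ≥0∞ :=
  genVar (fun s t => max (ψ t - ψ s - c) 0)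

noncomputable def DTVc (ψ : ℝ → ℝ) (c : ℝ) : ℝ → ℝ → ℝ≥0∞ :=
  genVar (fun s t => max (ψ s - ψ t - c) 0)

noncomputable def TVab (ψ α β : ℝ → ℝ) : ℝ → ℝ → ℝ≥0∞ :=
  genVar (fun s t =>
    max (|(ψ t - (α t + β t) / 2) - (ψ s - (α s + β s) / 2)|
          - ((β t - α t) + (β s - α s)) / 2) 0)

noncomputable def UTVab (ψ α β : ℝ → ℝ) : ℝ → ℝ → ℝ≥0∞ :=
  genVar (fun s t =>
    max ((ψ t - (α t + β t) / 2) - (ψ s - (α s + β s) / 2)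
          - ((β t - α t) + (β s - α s)) / 2) 0)

noncomputable def DTVab (ψ α β : ℝ → ℝ) : ℝ → ℝ → ℝ≥0∞ :=
  genVar (fun s t =>
    max ((ψ s - (α s + β s) / 2) - (ψ t - (α t + β t) / 2)
          - ((β t - α t) + (β s - α s)) / 2) 0)

/-- Regulated on `[a,∞)`: right limits everywhere, left limits at points `> a`. -/
def Regulated (a : ℝ) (ψ : ℝ → ℝ) : Prop :=
  (∀ x, a ≤ x → ∃ L, Tendsto ψ (𝓝[>] x) (𝓝 L)) ∧
  (∀ x, a < x → ∃ L, Tendsto ψ (𝓝[<] x) (𝓝 L))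

/-- Regulated on `[a,b]`. -/
def RegulatedOn (a b : ℝ) (ψ : ℝ → ℝ) : Prop :=
  (∀ x, a ≤ x → x < b → ∃ L, Tendsto ψ (𝓝[>] x) (𝓝 L)) ∧
  (∀ x, a < x → x ≤ b → ∃ L, Tendsto ψ (𝓝[<] x) (𝓝 L))

private lemma chain_mono {n : ℕ} {t : ℕ → ℝ} (h : ∀ i, i < n → t i < t (i + 1)) :
    ∀ i j, i ≤ j → j ≤ n → t i ≤ t j := by
  intro i j
  induction j with
  | zero => intro hij _; simp [Nat.le_zero.mp hij]
  | succ k ih =>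
    intro hij hjn
    rcases Nat.lt_or_ge i (k + 1) with h1 | h2
    · exact le_trans (ih (by omega) (by omega)) (le_of_lt (h k (by omega)))
    · have : i = k + 1 := by omega
      rw [this]

private lemma le_genVar (f : ℝ → ℝ → ℝ) (a b : ℝ) (n : ℕ) (t : ℕ → ℝ)
    (hc : (∀ i, i < n → t i < t (i + 1)) ∧ a ≤ t 0 ∧ t n ≤ b) :
    ENNReal.ofReal (∑ i ∈ Finset.range n, f (t i) (t (i + 1))) ≤ genVar f a b := by
  unfold genVar
  exact le_iSup_of_le n (le_iSup_of_le t (le_iSup_of_le hc le_rfl))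

private lemma genVar_mono {f g : ℝ → ℝ → ℝ} {a b : ℝ}
    (h : ∀ s t, a ≤ s → s < t → t ≤ b → f s t ≤ g s t) :
    genVar f a b ≤ genVar g a b := by
  refine iSup_le fun n => iSup_le fun t => iSup_le fun hc => ?_
  refine le_trans ?_ (le_genVar g a b n t hc)
  apply ENNReal.ofReal_le_ofReal
  apply Finset.sum_le_sum
  intro i hi
  simp only [Finset.mem_range] at hi
  exact h _ _ (le_trans hc.2.1 (chain_mono hc.1 0 i (Nat.zero_le _) (by omega)))
    (hc.1 i hi) (le_trans (chain_mono hc.1 (i + 1) n (by omega) le_rfl) hc.2.2)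

private lemma genVar_add_le (f g : ℝ → ℝ → ℝ) (a b : ℝ) :
    genVar (fun s t => f s t + g s t) a b ≤ genVar f a b + genVar g a b := by
  refine iSup_le fun n => iSup_le fun t => iSup_le fun hc => ?_
  rw [Finset.sum_add_distrib]
  exact le_trans ENNReal.ofReal_add_le
    (add_le_add (le_genVar f a b n t hc) (le_genVar g a b n t hc))

private lemma prepend_partition (f : ℝ → ℝ → ℝ) (hss : ∀ x, f x x = 0)
    {a : ℝ} {n : ℕ} {t : ℕ → ℝ} (hc : ∀ i, i < n → t i < t (i + 1)) (ha : a ≤ t 0) :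
    ∃ (m : ℕ) (s : ℕ → ℝ), (∀ i, i < m → s i < s (i + 1)) ∧ s 0 = a ∧ s m = t n ∧
      ∑ i ∈ Finset.range m, f (s i) (s (i + 1))
        = f a (t 0) + ∑ i ∈ Finset.range n, f (t i) (t (i + 1)) := by
  rcases eq_or_lt_of_le ha with h | h
  · exact ⟨n, t, hc, h.symm, rfl, by rw [← h, hss a, zero_add]⟩
  · refine ⟨n + 1, fun i => if i = 0 then a else t (i - 1), ?_, by simp, by simp, ?_⟩
    · intro i hi
      rcases Nat.eq_zero_or_pos i with rfl | hpos
      · simpa using h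
      · have h1 : i ≠ 0 := by omega
        have h2 : i + 1 ≠ 0 := by omega
        simp only [if_neg h1, if_neg h2]
        have : i - 1 + 1 = i := by omega
        rw [← this]
        exact hc (i - 1) (by omega)
    · rw [Finset.sum_range_succ', add_comm]
      congr 1

private lemma append_partition (f : ℝ → ℝ → ℝ) (hss : ∀ x, f x x = 0)
    {b : ℝ} {n : ℕ} {t : ℕ → ℝ} (hc : ∀ i, i < n → t i < t (i + 1)) (hb : t n ≤ b) :
    ∃ (m : ℕ) (s : ℕ → ℝ), (∀ i, i < m → s i < s (i + 1)) ∧ s 0 = t 0 ∧ s m = b ∧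
      ∑ i ∈ Finset.range m, f (s i) (s (i + 1))
        = (∑ i ∈ Finset.range n, f (t i) (t (i + 1))) + f (t n) b := by
  rcases eq_or_lt_of_le hb with h | h
  · exact ⟨n, t, hc, rfl, h, by rw [h, hss b, add_zero]⟩
  · refine ⟨n + 1, fun i => if i ≤ n then t i else b, ?_, by simp, by simp, ?_⟩
    · intro i hi
      rcases Nat.lt_or_ge i n with h1 | h2
      · simp only [if_pos (by omega : i ≤ n), if_pos (by omega : i + 1 ≤ n)]
        exact hc i h1
      · have : i = n := by omega
        subst this
        simp only [if_pos le_rfl, if_neg (by omega : ¬ i + 1 ≤ i)]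
        exact h
    · rw [Finset.sum_range_succ]
      simp only [if_pos le_rfl, if_neg (by omega : ¬ n + 1 ≤ n)]
      congr 1
      refine Finset.sum_congr rfl fun i hi => ?_
      simp only [Finset.mem_range] at hi
      simp only [if_pos (by omega : i ≤ n), if_pos (by omega : i + 1 ≤ n)]

private lemma span_partition (f : ℝ → ℝ → ℝ) (hss : ∀ x, f x x = 0)
    {a b : ℝ} {n : ℕ} {t : ℕ → ℝ} (hc : ∀ i, i < n → t i < t (i + 1))
    (ha : a ≤ t 0) (hb : t n ≤ b) :
    ∃ (m : ℕ) (s : ℕ → ℝ), (∀ i, i < m → s i < s (i + 1)) ∧ s 0 = a ∧ s m = b ∧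
      ∑ i ∈ Finset.range m, f (s i) (s (i + 1))
        = f a (t 0) + (∑ i ∈ Finset.range n, f (t i) (t (i + 1))) + f (t n) b := by
  obtain ⟨m1, s1, hc1, h10, h1m, hsum1⟩ := prepend_partition f hss hc ha
  obtain ⟨m2, s2, hc2, h20, h2m, hsum2⟩ := append_partition f hss hc1 (h1m ▸ hb)
  exact ⟨m2, s2, hc2, h20.trans h10, h2m, by rw [hsum2, hsum1, h1m]⟩

private lemma sum_max_eq (n : ℕ) (t : ℕ → ℝ) (ξ : ℝ → ℝ) :
    ∑ i ∈ Finset.range n, max (ξ (t (i + 1)) - ξ (t i)) 0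
      = ((∑ i ∈ Finset.range n, |ξ (t (i + 1)) - ξ (t i)|) + (ξ (t n) - ξ (t 0))) / 2 := by
  rw [← Finset.sum_range_sub (fun i => ξ (t i)), ← Finset.sum_add_distrib, Finset.sum_div]
  refine Finset.sum_congr rfl fun i _ => ?_
  rcases le_total (ξ (t (i + 1)) - ξ (t i)) 0 with h | h
  · rw [max_eq_right h, abs_of_nonpos h]; ring
  · rw [max_eq_left h, abs_of_nonneg h]; ring

private lemma sum_max_neg_eq (n : ℕ) (t : ℕ → ℝ) (ξ : ℝ → ℝ) :
    ∑ i ∈ Finset.range n, max (ξ (t i) - ξ (t (i + 1))) 0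
      = ((∑ i ∈ Finset.range n, |ξ (t (i + 1)) - ξ (t i)|) - (ξ (t n) - ξ (t 0))) / 2 := by
  rw [← Finset.sum_range_sub (fun i => ξ (t i)), ← Finset.sum_sub_distrib, Finset.sum_div]
  refine Finset.sum_congr rfl fun i _ => ?_
  rcases le_total (ξ (t (i + 1)) - ξ (t i)) 0 with h | h
  · rw [max_eq_left (by linarith), abs_of_nonpos h]; ring
  · rw [max_eq_right (by linarith), abs_of_nonneg h]; ring

private lemma core_bound (ξ : ℝ → ℝ) {a b : ℝ} (hT : TV ξ a b ≠ ⊤)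
    {n : ℕ} {t : ℕ → ℝ} (hc : (∀ i, i < n → t i < t (i + 1)) ∧ a ≤ t 0 ∧ t n ≤ b) :
    |ξ (t 0) - ξ a| + (∑ i ∈ Finset.range n, |ξ (t (i + 1)) - ξ (t i)|) + |ξ b - ξ (t n)|
      ≤ (TV ξ a b).toReal := by
  obtain ⟨m, s, hcs, hs0, hsm, hsum⟩ := span_partition (fun u v => |ξ v - ξ u|)
    (fun x => by simp) hc.1 hc.2.1 hc.2.2
  have h1 : ENNReal.ofReal (∑ i ∈ Finset.range m, |ξ (s (i + 1)) - ξ (s i)|) ≤ TV ξ a b :=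
    le_genVar _ a b m s ⟨hcs, hs0.ge, hsm.le⟩
  rw [hsum] at h1
  have h2 := (ENNReal.ofReal_le_iff_le_toReal hT).mp h1
  linarith

private lemma max_abs_split (x y c : ℝ) (hxy : x + y = 0) :
    max (|x| - c) 0 ≤ max (x - c) 0 + max (y - c) 0 := by
  have hy : y = -x := by linarith
  subst hy
  rcases le_total x 0 with h | h
  · rw [abs_of_nonpos h]
    refine max_le ?_ (by positivity)
    calc -x - c ≤ max (-x - c) 0 := le_max_left _ _
      _ ≤ max (x - c) 0 + max (-x - c) 0 := le_add_of_nonneg_left (le_max_right _ _)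
  · rw [abs_of_nonneg h]
    refine max_le ?_ (by positivity)
    calc x - c ≤ max (x - c) 0 := le_max_left _ _
      _ ≤ max (x - c) 0 + max (-x - c) 0 := le_add_of_nonneg_right (le_max_right _ _)

private lemma key_formula (t₀ : ℝ) (ψ α β : ℝ → ℝ)
    (hfin : ∀ t, t₀ ≤ t → TVab ψ α β t₀ t < ⊤)
    (ξ : ℝ → ℝ)
    (hbound : ∀ t, t₀ ≤ t → α t ≤ ψ t - ξ t ∧ ψ t - ξ t ≤ β t)
    (hmin : ∀ t, t₀ ≤ t → TV ξ t₀ t ≤ TVab ψ α β t₀ t) :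
    ∀ b, t₀ ≤ b →
      ξ b = ξ t₀ + (UTVab ψ α β t₀ b).toReal - (DTVab ψ α β t₀ b).toReal := by
  intro b hab
  have hTabfin : TVab ψ α β t₀ b ≠ ⊤ := (hfin b hab).ne
  have hTle : TV ξ t₀ b ≤ TVab ψ α β t₀ b := hmin b hab
  have hTfin : TV ξ t₀ b ≠ ⊤ := ne_top_of_le_ne_top hTabfin hTle
  have hUle : UTVab ψ α β t₀ b ≤ UTV ξ t₀ b := by
    unfold UTVab UTV
    refine genVar_mono fun s u hs hsu hub => ?_
    have h1 := hbound s hs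
    have h2 := hbound u (le_trans hs hsu.le)
    exact max_le (le_max_of_le_left (by linarith [h1.1, h1.2, h2.1, h2.2]))
      (le_max_right _ _)
  have hDle : DTVab ψ α β t₀ b ≤ DTV ξ t₀ b := by
    unfold DTVab DTV
    refine genVar_mono fun s u hs hsu hub => ?_
    have h1 := hbound s hs
    have h2 := hbound u (le_trans hs hsu.le)
    exact max_le (le_max_of_le_left (by linarith [h1.1, h1.2, h2.1, h2.2]))
      (le_max_right _ _)
  have hsplit : TVab ψ α β t₀ b ≤ UTVab ψ α β t₀ b + DTVab ψ α β t₀ b := by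
    unfold TVab UTVab DTVab
    refine le_trans (genVar_mono fun s u _ _ _ => ?_) (genVar_add_le _ _ t₀ b)
    exact max_abs_split _ _ _ (by ring)
  have habs : |ξ b - ξ t₀| ≤ (TV ξ t₀ b).toReal := by
    have h0 := core_bound ξ hTfin (n := 0) (t := fun _ => t₀) ⟨by omega, le_rfl, hab⟩
    simpa using h0
  have hUb : UTV ξ t₀ b ≤
      ENNReal.ofReal (((TV ξ t₀ b).toReal + (ξ b - ξ t₀)) / 2) := by
    unfold UTV
    refine iSup_le fun n => iSup_le fun t => iSup_le fun hc => ENNReal.ofReal_le_ofReal ?_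
    have hcore := core_bound ξ hTfin hc
    rw [sum_max_eq]
    have e1 := neg_abs_le (ξ b - ξ (t n))
    have e2 := neg_abs_le (ξ (t 0) - ξ t₀)
    linarith
  have hDb : DTV ξ t₀ b ≤
      ENNReal.ofReal (((TV ξ t₀ b).toReal - (ξ b - ξ t₀)) / 2) := by
    unfold DTV
    refine iSup_le fun n => iSup_le fun t => iSup_le fun hc => ENNReal.ofReal_le_ofReal ?_
    have hcore := core_bound ξ hTfin hc
    rw [sum_max_neg_eq]
    have e1 := le_abs_self (ξ b - ξ (t n))
    have e2 := le_abs_self (ξ (t 0) - ξ t₀)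
    linarith
  have hUfin : UTV ξ t₀ b ≠ ⊤ := ne_top_of_le_ne_top ENNReal.ofReal_ne_top hUb
  have hDfin : DTV ξ t₀ b ≠ ⊤ := ne_top_of_le_ne_top ENNReal.ofReal_ne_top hDb
  have hUafin : UTVab ψ α β t₀ b ≠ ⊤ := ne_top_of_le_ne_top hUfin hUle
  have hDafin : DTVab ψ α β t₀ b ≠ ⊤ := ne_top_of_le_ne_top hDfin hDle
  have hua : (UTVab ψ α β t₀ b).toReal ≤ (UTV ξ t₀ b).toReal :=
    ENNReal.toReal_mono hUfin hUle
  have hda : (DTVab ψ α β t₀ b).toReal ≤ (DTV ξ t₀ b).toReal :=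
    ENNReal.toReal_mono hDfin hDle
  have hTab_le : (TVab ψ α β t₀ b).toReal
      ≤ (UTVab ψ α β t₀ b).toReal + (DTVab ψ α β t₀ b).toReal := by
    rw [← ENNReal.toReal_add hUafin hDafin]
    exact ENNReal.toReal_mono (ENNReal.add_ne_top.mpr ⟨hUafin, hDafin⟩) hsplit
  have hTTab : (TV ξ t₀ b).toReal ≤ (TVab ψ α β t₀ b).toReal :=
    ENNReal.toReal_mono hTabfin hTle
  have hu : (UTV ξ t₀ b).toReal ≤ ((TV ξ t₀ b).toReal + (ξ b - ξ t₀)) / 2 :=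
    ENNReal.toReal_le_of_le_ofReal (by linarith [neg_abs_le (ξ b - ξ t₀)]) hUb
  have hd : (DTV ξ t₀ b).toReal ≤ ((TV ξ t₀ b).toReal - (ξ b - ξ t₀)) / 2 :=
    ENNReal.toReal_le_of_le_ofReal (by linarith [le_abs_self (ξ b - ξ t₀)]) hDb
  linarith

/-- any function `ξ` with `α ≤ ψ - ξ ≤ β` whose total
variation on every `[t₀,t]` does not exceed the α,β-truncated variation
of `ψ` satisfies the Jordan-like formula; in particular two such
functions with the same initial value coincide. -/
theorem stmt6 (t₀ : ℝ) (ht₀ : 0 ≤ t₀) (ψ α β : ℝ → ℝ)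
    (hψ : Regulated t₀ ψ) (hα : Regulated t₀ α) (hβ : Regulated t₀ β)
    (hαβ : ∀ t, t₀ ≤ t → α t ≤ β t)
    (hfin : ∀ t, t₀ ≤ t → TVab ψ α β t₀ t < ⊤)
    (ξ : ℝ → ℝ)
    (hbound : ∀ t, t₀ ≤ t → α t ≤ ψ t - ξ t ∧ ψ t - ξ t ≤ β t)
    (hmin : ∀ t, t₀ ≤ t → TV ξ t₀ t ≤ TVab ψ α β t₀ t) :
    (∀ t, t₀ ≤ t →
      ξ t = ξ t₀ + (UTVab ψ α β t₀ t).toReal - (DTVab ψ α β t₀ t).toReal) ∧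
    (∀ ξ' : ℝ → ℝ,
      (∀ t, t₀ ≤ t → α t ≤ ψ t - ξ' t ∧ ψ t - ξ' t ≤ β t) →
      (∀ t, t₀ ≤ t → TV ξ' t₀ t ≤ TVab ψ α β t₀ t) →
      ξ' t₀ = ξ t₀ → ∀ t, t₀ ≤ t → ξ' t = ξ t) := by
  refine ⟨key_formula t₀ ψ α β hfin ξ hbound hmin, ?_⟩
  intro ξ' hb' hm' h0 t ht
  rw [key_formula t₀ ψ α β hfin ξ' hb' hm' t ht,
    key_formula t₀ ψ α β hfin ξ hbound hmin t ht, h0]
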